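/- arXiv:1707.09435 — 3 statements merged into one kernel-verified Lean document; each statement's English description precedes it below -/
import Mathlib

section
/- Let P and Q be fs monoids (finitely generated, cancellative, saturated additive commutative monoids) with Q sharp. Let θ : P →+ Q be a Kummer homomorphism, i.e. θ is injective and for every q ∈ Q there exist an integer n ≥ 1 and p ∈ P with n • q = θ p. Suppose there exists a monoid homomorphism η : Q →+ P with η ∘ θ = id_P. Then θ is bijective, hence an isomorphism of monoids. -/
/-- Lemma 0.3.5: a Kummer homomorphism `θ : P →+ Q` of fs monoids (here: finitely
generated, cancellative, saturated additive commutative monoids) with `Q` sharp, which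
admits a retraction `η` with `η ∘ θ = id`, is bijective (hence an isomorphism). -/
theorem kummer_retraction_bijective
    {P Q : Type*} [AddCommMonoid P] [AddCommMonoid Q]
    (hPfg : AddMonoid.FG P) (hQfg : AddMonoid.FG Q)
    (hPcancel : ∀ a b c : P, a + c = b + c → a = b)
    (hQcancel : ∀ a b c : Q, a + c = b + c → a = b)
    (hPsat : ∀ (a b : P) (n : ℕ), 1 ≤ n → (∃ c : P, n • a = n • b + c) → ∃ d : P, a = b + d)
    (hQsat : ∀ (a b : Q) (n : ℕ), 1 ≤ n → (∃ c : Q, n • a = n • b + c) → ∃ d : Q, a = b + d)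
    (hQsharp : ∀ a b : Q, a + b = 0 → a = 0)
    (θ : P →+ Q)
    (hθinj : Function.Injective θ)
    (hθkummer : ∀ q : Q, ∃ (n : ℕ) (p : P), 1 ≤ n ∧ n • q = θ p)
    (η : Q →+ P) (hretr : η.comp θ = AddMonoidHom.id P) :
    Function.Bijective θ := by
  refine ⟨hθinj, fun q => ?_⟩
  obtain ⟨n, p, hn, hnq⟩ := hθkummer q
  have hηp : η (θ p) = p := congrArg (fun f => f p) hretr
  have hp : n • η q = p := by
    have := congrArg η hnq
    simpa [hηp] using this
  have key : n • θ (η q) = n • q := by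
    rw [← map_nsmul, hp, ← hnq]
  obtain ⟨d, hd⟩ := hQsat (θ (η q)) q n hn ⟨0, by rw [key, add_zero]⟩
  obtain ⟨e, he⟩ := hQsat q (θ (η q)) n hn ⟨0, by rw [key, add_zero]⟩
  have hde : d + e = 0 := by
    have : q + (d + e) = q + 0 := by
      rw [add_zero]
      calc q + (d + e) = (q + d) + e := (add_assoc q d e).symm
        _ = θ (η q) + e := by rw [← hd]
        _ = q := he.symm
    exact hQcancel _ _ _ (by simpa [add_comm] using this)
  have hd0 : d = 0 := hQsharp d e hde
  exact ⟨η q, by rw [hd, hd0, add_zero]⟩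
end

section
/- Let P and P' be additive commutative monoids with P sharp and P' finitely generated (as an additive monoid). Let η : P →+ P' be a homomorphism such that: (i) for every p ∈ P, if η p is an additive unit of P' then p = 0; and (ii) for every p' ∈ P' there exist an integer n ≥ 1, an element p ∈ P, and an additive unit u of P' with n • p' = η p + u (i.e. the induced homomorphism on sharp quotients is Kummer). In the monoid algebra R = AddMonoidAlgebra ℤ P', let 𝔪 be the ideal generated by the monomials X^{p'} (i.e. Finsupp.single p' 1) for p' a non-unit of P', and let 𝔫 be the ideal generated by the monomials X^{η p + q} for p ∈ P with p ≠ 0 and q ∈ P'. Then 𝔫 ≤ 𝔪 and there exists m ∈ ℕ with 𝔪 ^ m ≤ 𝔫; in particular 𝔪 and 𝔫 have the same radical. -/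
/-- Lemma 6.1.6 (ideal-theoretic content): in `ℤ[P']`, the ideal `𝔫` generated by the
monomials coming from the monoid ideal generated by `η(P⁺)` is contained in the ideal `𝔪`
generated by the monomials at nonunits of `P'`, some power of `𝔪` is contained in `𝔫`,
and consequently `𝔪` and `𝔫` have the same radical. -/
theorem monoidAlgebra_ideal_pow_le_of_kummer
    {P P' : Type*} [AddCommMonoid P] [AddCommMonoid P']
    (hPsharp : ∀ a b : P, a + b = 0 → a = 0)
    (hP'fg : AddMonoid.FG P')
    (η : P →+ P')
    (h1 : ∀ p : P, IsAddUnit (η p) → p = 0)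
    (h2 : ∀ p' : P', ∃ (n : ℕ) (p : P) (u : P'),
      1 ≤ n ∧ IsAddUnit u ∧ n • p' = η p + u)
    (𝔪 𝔫 : Ideal (AddMonoidAlgebra ℤ P'))
    (h𝔪 : 𝔪 = Ideal.span
      {x : AddMonoidAlgebra ℤ P' | ∃ p' : P', ¬ IsAddUnit p' ∧ x = AddMonoidAlgebra.single p' 1})
    (h𝔫 : 𝔫 = Ideal.span
      {x : AddMonoidAlgebra ℤ P' | ∃ (p : P) (q : P'), p ≠ 0 ∧ x = AddMonoidAlgebra.single (η p + q) 1}) :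
    𝔫 ≤ 𝔪 ∧ (∃ m : ℕ, 𝔪 ^ m ≤ 𝔫) ∧ 𝔪.radical = 𝔫.radical := by
  haveI : AddMonoid.FG P' := hP'fg
  haveI : IsNoetherianRing (AddMonoidAlgebra ℤ P') :=
    Algebra.FiniteType.isNoetherianRing ℤ _
  -- 𝔫 ≤ 𝔪
  have hle : 𝔫 ≤ 𝔪 := by
    rw [h𝔪, h𝔫]
    apply Ideal.span_mono
    rintro x ⟨p, q, hp, rfl⟩
    refine ⟨η p + q, ?_, rfl⟩
    intro hu
    exact hp (h1 p (isAddUnit_of_add_isAddUnit_left hu))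
  -- 𝔪 ≤ radical 𝔫
  have hrad : 𝔪 ≤ 𝔫.radical := by
    rw [h𝔪]
    rw [Ideal.span_le]
    rintro x ⟨p', hp', rfl⟩
    obtain ⟨n, p, u, hn, hu, heq⟩ := h2 p'
    have hp : p ≠ 0 := by
      rintro rfl
      apply hp'
      have : IsAddUnit (n • p') := by
        rw [heq, map_zero, zero_add]; exact hu
      obtain ⟨k, rfl⟩ := Nat.exists_eq_add_of_le hn
      rw [add_comm, add_nsmul, one_nsmul] at this
      exact isAddUnit_of_add_isAddUnit_right this
    refine ⟨n, ?_⟩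
    rw [AddMonoidAlgebra.single_pow, one_pow, heq, h𝔫]
    exact Ideal.subset_span ⟨p, u, hp, rfl⟩
  have hfg : 𝔪.FG := (isNoetherian_def.mp inferInstance) 𝔪
  obtain ⟨m, hm⟩ := Ideal.exists_pow_le_of_le_radical_of_fg hrad hfg
  refine ⟨hle, ⟨m, hm⟩, le_antisymm ?_ (Ideal.radical_mono hle)⟩
  exact (Ideal.radical_mono hrad).trans_eq (Ideal.radical_idem 𝔫)
end

section
/- Let A and B be categories, F : A ⥤ B a functor with right adjoint U : B ⥤ A (an adjunction F ⊣ U, with unit η : 𝟭_A ⟶ F ⋙ U and counit ε : U ⋙ F ⟶ 𝟭_B). Let H : A ⥤ B be a functor and p : F ⟶ H a natural transformation. Assume that for every object a of A, the component p.app (U.obj (F.obj a)) : F(U(F a)) ⟶ H(U(F a)) is an isomorphism. Then p is a split natural monomorphism: the natural transformation φ : H ⟶ F whose component at a is φ_a = ε.app (F.obj a) ∘ (inverse of p.app (U.obj (F.obj a))) ∘ H.map (η.app a) satisfies p ≫ φ = 𝟙 F (i.e. φ_a ∘ p.app a = id for every a). -/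
/-!
The candidate retraction is the composite `Hη ≫ (p (F ⋙ U))⁻¹ ≫ Fε` of whiskered natural
transformations, so it is natural for free. Precomposed with `p`, naturality of `p` at `η_a`
cancels `p_{U(F a)}` against its inverse, and what is left, `F(η_a) ≫ ε_{F a}`, is the identity
by the triangle identity of `F ⊣ U`.
-/

open CategoryTheory Functor

namespace CategoryTheory.Adjunction

variable {A B : Type*} [Category A] [Category B] {F : A ⥤ B} {U : B ⥤ A} (adj : F ⊣ U)
  {H : A ⥤ B} (p : F ⟶ H) [∀ a, IsIso (p.app (U.obj (F.obj a)))]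

noncomputable def retractionOfIsIsoOnImage : H ⟶ F :=
  have : IsIso (whiskerLeft (F ⋙ U) p) := (NatTrans.isIso_iff_isIso_app _).2 ‹_›
  whiskerRight adj.unit H ≫ inv (whiskerLeft (F ⋙ U) p) ≫ whiskerLeft F adj.counit

lemma retractionOfIsIsoOnImage_app (a : A) :
    (adj.retractionOfIsIsoOnImage p).app a =
      H.map (adj.unit.app a) ≫ inv (p.app (U.obj (F.obj a))) ≫ adj.counit.app (F.obj a) := by
  simp only [retractionOfIsIsoOnImage, NatTrans.comp_app, whiskerRight_app, whiskerLeft_app,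
    NatIso.isIso_inv_app, comp_obj]

lemma comp_retractionOfIsIsoOnImage : p ≫ adj.retractionOfIsIsoOnImage p = 𝟙 F := by
  ext a
  rw [NatTrans.comp_app, retractionOfIsIsoOnImage_app, ← p.naturality_assoc]
  simp only [comp_obj, IsIso.hom_inv_id_assoc, adj.left_triangle_components, NatTrans.id_app]

end CategoryTheory.Adjunction

/-- Construction of the left inverse `φ₂` of the purity transformation (proofs of
Theorem 5.5.7 and Proposition 9.3.7): if `F ⊣ U` with unit `η` and counit `ε`, and
`p : F ⟶ H` is a natural transformation whose component at every object of the form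
`U (F a)` is an isomorphism, then `p` is a split natural monomorphism, split by the
natural transformation with components `φ_a = H(η_a) ≫ (p_{U(F a)})⁻¹ ≫ ε_{F a}`. -/
theorem splitMono_of_isIso_on_image
    {A B : Type*} [Category A] [Category B]
    (F : A ⥤ B) (U : B ⥤ A) (adj : F ⊣ U)
    (H : A ⥤ B) (p : F ⟶ H)
    (hiso : ∀ a : A, IsIso (p.app (U.obj (F.obj a)))) :
    ∃ φ : H ⟶ F,
      (∀ a : A, φ.app a =
        H.map (adj.unit.app a) ≫
          inv (p.app (U.obj (F.obj a))) (I := hiso a) ≫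
            adj.counit.app (F.obj a)) ∧
      p ≫ φ = 𝟙 F :=
  ⟨adj.retractionOfIsIsoOnImage p, adj.retractionOfIsIsoOnImage_app p,
    adj.comp_retractionOfIsIsoOnImage p⟩
end
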